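/- Conversely, let γ : I → ℝ³ be a unit-speed curve with nowhere-vanishing curvature k and torsion τ such that τ(s)/k(s) = a s + b with constants a ≠ 0, b. Then γ is congruent to a rectifying curve, i.e., there is a translation vector v ∈ ℝ³ such that γ + v satisfies ⟨(γ + v)(s), n(s)⟩ = 0 for all s. -/

import Mathlib

noncomputable section

open scoped RealInnerProductSpace
open Set

/-- `ℝ³` as a Euclidean space. -/
abbrev E3 : Type := EuclideanSpace ℝ (Fin 3)

/-- The cross product on `ℝ³`. -/
def cross3 (x y : E3) : E3 :=
  WithLp.toLp 2 ![x 1 * y 2 - x 2 * y 1, x 2 * y 0 - x 0 * y 2, x 0 * y 1 - x 1 * y 0]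

/-- A `3 × 3` matrix acting on `ℝ³`. -/
def matVec (A : Matrix (Fin 3) (Fin 3) ℝ) (x : E3) : E3 :=
  WithLp.toLp 2 (fun i => ∑ j, A i j * x j)


lemma E3_inner (x y : E3) : ⟪x, y⟫ = x 0 * y 0 + x 1 * y 1 + x 2 * y 2 := by
  simp [PiLp.inner_apply, Fin.sum_univ_three, RCLike.inner_apply]; ring

lemma cross3_0 (x y : E3) : cross3 x y 0 = x 1 * y 2 - x 2 * y 1 := by simp [cross3]
lemma cross3_1 (x y : E3) : cross3 x y 1 = x 2 * y 0 - x 0 * y 2 := by simp [cross3]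
lemma cross3_2 (x y : E3) : cross3 x y 2 = x 0 * y 1 - x 1 * y 0 := by simp [cross3]

lemma cross3_inner_left (x y : E3) : ⟪cross3 x y, x⟫ = 0 := by
  simp only [E3_inner, cross3_0, cross3_1, cross3_2]; ring

lemma cross3_inner_right (x y : E3) : ⟪cross3 x y, y⟫ = 0 := by
  simp only [E3_inner, cross3_0, cross3_1, cross3_2]; ring

lemma cross3_self_inner (x y : E3) :
    ⟪cross3 x y, cross3 x y⟫ = ⟪x,x⟫*⟪y,y⟫ - ⟪x,y⟫*⟪x,y⟫ := by
  simp only [E3_inner, cross3_0, cross3_1, cross3_2]; ring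

lemma cross3_anti (x y : E3) : cross3 y x = -cross3 x y := by
  ext i; fin_cases i <;>
    simp only [Fin.zero_eta, Fin.mk_one, Fin.reduceFinMk, cross3_0, cross3_1, cross3_2,
      PiLp.neg_apply] <;> ring

lemma cross3_triple (x y z : E3) :
    cross3 (cross3 x y) z = ⟪z,x⟫ • y - ⟪z,y⟫ • x := by
  ext i; fin_cases i <;>
    simp only [Fin.zero_eta, Fin.mk_one, Fin.reduceFinMk, cross3_0, cross3_1, cross3_2,
      PiLp.sub_apply, PiLp.smul_apply, E3_inner, smul_eq_mul] <;> ring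

lemma cross3_smul_left (c : ℝ) (x y : E3) : cross3 (c • x) y = c • cross3 x y := by
  ext i; fin_cases i <;>
    simp only [Fin.zero_eta, Fin.mk_one, Fin.reduceFinMk, cross3_0, cross3_1, cross3_2,
      PiLp.smul_apply, smul_eq_mul] <;> ring

lemma cross3_smul_right (c : ℝ) (x y : E3) : cross3 x (c • y) = c • cross3 x y := by
  ext i; fin_cases i <;>
    simp only [Fin.zero_eta, Fin.mk_one, Fin.reduceFinMk, cross3_0, cross3_1, cross3_2,
      PiLp.smul_apply, smul_eq_mul] <;> ring

lemma hasDerivAt_comp_proj {u : ℝ → E3} {u' : E3} {s : ℝ} (h : HasDerivAt u u' s) (i : Fin 3) :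
    HasDerivAt (fun s => u s i) (u' i) s :=
  (EuclideanSpace.proj i : E3 →L[ℝ] ℝ).hasFDerivAt.comp_hasDerivAt s h

lemma hasDerivAt_E3 {u : ℝ → E3} {u' : E3} {s : ℝ}
    (h : ∀ i, HasDerivAt (fun s => u s i) (u' i) s) : HasDerivAt u u' s :=
  (((EuclideanSpace.equiv (Fin 3) ℝ).symm : (Fin 3 → ℝ) ≃L[ℝ] E3) :
      (Fin 3 → ℝ) →L[ℝ] E3).hasFDerivAt.comp_hasDerivAt s (hasDerivAt_pi.2 h)

lemma cross3_hasDerivAt {u w : ℝ → E3} {u' w' : E3} {s : ℝ}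
    (hu : HasDerivAt u u' s) (hw : HasDerivAt w w' s) :
    HasDerivAt (fun s => cross3 (u s) (w s)) (cross3 u' (w s) + cross3 (u s) w') s := by
  apply hasDerivAt_E3
  intro i
  have h0u := hasDerivAt_comp_proj hu 0
  have h1u := hasDerivAt_comp_proj hu 1
  have h2u := hasDerivAt_comp_proj hu 2
  have h0w := hasDerivAt_comp_proj hw 0
  have h1w := hasDerivAt_comp_proj hw 1
  have h2w := hasDerivAt_comp_proj hw 2
  have c0 : ∀ x y : E3, cross3 x y 0 = x 1 * y 2 - x 2 * y 1 := fun _ _ => cross3_0 _ _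
  have c1 : ∀ x y : E3, cross3 x y 1 = x 2 * y 0 - x 0 * y 2 := fun _ _ => cross3_1 _ _
  have c2 : ∀ x y : E3, cross3 x y 2 = x 0 * y 1 - x 1 * y 0 := fun _ _ => cross3_2 _ _
  fin_cases i
  · simp only [Fin.zero_eta, PiLp.add_apply, c0]
    refine ((h1u.mul h2w).sub (h2u.mul h1w)).congr_deriv ?_; ring
  · simp only [Fin.mk_one, PiLp.add_apply, c1]
    refine ((h2u.mul h0w).sub (h0u.mul h2w)).congr_deriv ?_; ring
  · simp only [Fin.reduceFinMk, PiLp.add_apply, c2]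
    refine ((h0u.mul h1w).sub (h1u.mul h0w)).congr_deriv ?_; ring


/-- Converse: if `τ/k = a s + b` with `a ≠ 0`, then `γ` is congruent (by a
translation) to a rectifying curve. -/
theorem stmt6 (α β : ℝ) (γ : ℝ → E3) (hγ : ContDiff ℝ (⊤ : ℕ∞) γ)
    (hunit : ∀ s ∈ Ioo α β, ‖deriv γ s‖ = 1)
    (k : ℝ → ℝ) (hk : ∀ s, k s = ‖deriv (deriv γ) s‖)
    (hkpos : ∀ s ∈ Ioo α β, 0 < k s)
    (t n bv : ℝ → E3)
    (ht : ∀ s, t s = deriv γ s)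
    (hn : ∀ s, n s = (k s)⁻¹ • deriv (deriv γ) s)
    (hb : ∀ s, bv s = cross3 (t s) (n s))
    (τ : ℝ → ℝ)
    (hτ : ∀ s ∈ Ioo α β, deriv bv s = (-τ s) • n s)
    (a b : ℝ) (ha : a ≠ 0)
    (hratio : ∀ s ∈ Ioo α β, τ s / k s = a * s + b) :
    ∃ v : E3, ∀ s ∈ Ioo α β, ⟪γ s + v, n s⟫ = 0 := by
  by_cases hαβ : α < β
  swap
  · exact ⟨0, fun s hs => absurd hs (by simp [Ioo_eq_empty hαβ])⟩
  set s₀ : ℝ := (α + β) / 2 with hs₀def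
  have hs₀ : s₀ ∈ Ioo α β := ⟨by linarith, by linarith⟩
  -- smoothness of derivatives
  have hgi : ContDiff ℝ (↑(⊤:ℕ∞)) γ := hγ.of_le (by simp)
  have d1 : ContDiff ℝ (↑(⊤:ℕ∞)) (deriv γ) := (contDiff_infty_iff_deriv.mp hgi).2
  have d2 : ContDiff ℝ (↑(⊤:ℕ∞)) (deriv (deriv γ)) := (contDiff_infty_iff_deriv.mp d1).2
  have hopen : IsOpen (Ioo α β) := isOpen_Ioo
  have le_top' : (1 : WithTop ℕ∞) ≤ ((⊤:ℕ∞) : WithTop ℕ∞) := by exact_mod_cast le_top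
  have hle : (1 : WithTop ℕ∞) ≤ ((⊤:ℕ∞) : WithTop ℕ∞) := by exact_mod_cast le_top
  -- basic pointwise facts on the interval
  have hkne : ∀ s ∈ Ioo α β, k s ≠ 0 := fun s hs => (hkpos s hs).ne'
  have hddne : ∀ s ∈ Ioo α β, deriv (deriv γ) s ≠ 0 := by
    intro s hs h0
    have := hk s
    rw [h0, norm_zero] at this
    exact hkne s hs this
  have hdd : ∀ s ∈ Ioo α β, deriv (deriv γ) s = k s • n s := by
    intro s hs
    rw [hn s, smul_smul, mul_inv_cancel₀ (hkne s hs), one_smul]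
  -- derivative facts
  have hγ' : ∀ s : ℝ, HasDerivAt γ (t s) s := by
    intro s; rw [ht s]; exact (hγ.differentiable (by simp) s).hasDerivAt
  have ht' : ∀ s ∈ Ioo α β, HasDerivAt t (k s • n s) s := by
    intro s hs
    have : HasDerivAt (deriv γ) (deriv (deriv γ) s) s :=
      (d1.differentiable (by simp) s).hasDerivAt
    rw [hdd s hs] at this
    have htf : t = deriv γ := funext ht
    rw [htf]; exact this
  -- orthonormality
  have htt : ∀ s ∈ Ioo α β, ⟪t s, t s⟫ = 1 := by
    intro s hs
    rw [real_inner_self_eq_norm_sq, ht s, hunit s hs]; norm_num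
  have hγγ'' : ∀ s ∈ Ioo α β, ⟪deriv γ s, deriv (deriv γ) s⟫ = 0 := by
    intro s hs
    have hconst : (fun x => ⟪deriv γ x, deriv γ x⟫) =ᶠ[nhds s] (fun _ => (1:ℝ)) := by
      filter_upwards [hopen.mem_nhds hs] with x hx
      rw [real_inner_self_eq_norm_sq, hunit x hx]; norm_num
    have h1 : HasDerivAt (fun x => ⟪deriv γ x, deriv γ x⟫)
        (⟪deriv γ s, deriv (deriv γ) s⟫ + ⟪deriv (deriv γ) s, deriv γ s⟫) s :=
      HasDerivAt.inner ℝ ((d1.differentiable (by simp) s).hasDerivAt)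
        ((d1.differentiable (by simp) s).hasDerivAt)
    have h2 : HasDerivAt (fun x => ⟪deriv γ x, deriv γ x⟫) 0 s :=
      (hasDerivAt_const s (1:ℝ)).congr_of_eventuallyEq hconst
    have h3 := h1.unique h2
    rw [real_inner_comm]
    linarith [real_inner_comm (deriv γ s) (deriv (deriv γ) s)]
  have htn : ∀ s ∈ Ioo α β, ⟪t s, n s⟫ = 0 := by
    intro s hs
    rw [ht s, hn s, real_inner_smul_right, hγγ'' s hs, mul_zero]
  have hnn : ∀ s ∈ Ioo α β, ⟪n s, n s⟫ = 1 := by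
    intro s hs
    rw [real_inner_self_eq_norm_sq, hn s, norm_smul]
    rw [Real.norm_eq_abs, abs_inv, abs_of_pos (hkpos s hs), ← hk s]
    field_simp [hkne s hs]
  have hbt : ∀ s, ⟪bv s, t s⟫ = 0 := by
    intro s; rw [hb s]; exact cross3_inner_left _ _
  have hbn : ∀ s, ⟪bv s, n s⟫ = 0 := by
    intro s; rw [hb s]; exact cross3_inner_right _ _
  have htb : ∀ s, ⟪t s, bv s⟫ = 0 := fun s => by rw [real_inner_comm]; exact hbt s
  have hnb : ∀ s, ⟪n s, bv s⟫ = 0 := fun s => by rw [real_inner_comm]; exact hbn s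
  have hbb : ∀ s ∈ Ioo α β, ⟪bv s, bv s⟫ = 1 := by
    intro s hs
    rw [hb s, cross3_self_inner, htt s hs, hnn s hs, htn s hs]; ring
  -- differentiability of n and bv
  have hndiff : ∀ s ∈ Ioo α β, DifferentiableAt ℝ n s := by
    intro s hs
    have hkc : ContDiffAt ℝ 1 k s := by
      have : ContDiffAt ℝ 1 (fun x => ‖deriv (deriv γ) x‖) s :=
        ContDiffAt.norm ℝ (d2.contDiffAt.of_le le_top') (hddne s hs)
      exact this.congr_of_eventuallyEq (Filter.Eventually.of_forall hk)
    have : ContDiffAt ℝ 1 (fun x => (k x)⁻¹ • deriv (deriv γ) x) s :=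
      (hkc.inv (hkne s hs)).smul (d2.contDiffAt.of_le le_top')
    exact (this.congr_of_eventuallyEq (Filter.Eventually.of_forall hn)).differentiableAt one_ne_zero
  have hbv' : ∀ s ∈ Ioo α β, HasDerivAt bv ((-τ s) • n s) s := by
    intro s hs
    have hdiff : DifferentiableAt ℝ bv s := by
      have := cross3_hasDerivAt (ht' s hs) ((hndiff s hs).hasDerivAt)
      exact (this.congr_of_eventuallyEq (Filter.Eventually.of_forall hb)
        ).differentiableAt
    rw [← hτ s hs]
    exact hdiff.hasDerivAt
  have hn' : ∀ s ∈ Ioo α β, HasDerivAt n (τ s • bv s - k s • t s) s := by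
    intro s hs
    have heq : n =ᶠ[nhds s] (fun x => cross3 (bv x) (t x)) := by
      filter_upwards [hopen.mem_nhds hs] with x hx
      rw [hb x, cross3_triple, htt x hx, htn x hx, one_smul, zero_smul, sub_zero]
    have hc : HasDerivAt (fun x => cross3 (bv x) (t x))
        (cross3 ((-τ s) • n s) (t s) + cross3 (bv s) (k s • n s)) s :=
      cross3_hasDerivAt (hbv' s hs) (ht' s hs)
    have hval : cross3 ((-τ s) • n s) (t s) + cross3 (bv s) (k s • n s)
        = τ s • bv s - k s • t s := by
      rw [cross3_smul_left, cross3_smul_right]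
      have e1 : cross3 (n s) (t s) = -(bv s) := by rw [hb s, cross3_anti]
      have e2 : cross3 (bv s) (n s) = -(t s) := by
        rw [hb s, cross3_triple, real_inner_comm, htn s hs, hnn s hs, zero_smul, one_smul,
          zero_sub]
      rw [e1, e2]
      module
    rw [hval] at hc
    exact hc.congr_of_eventuallyEq heq
  -- the translation vector and auxiliary scalar functions
  set v : E3 := ((s₀ + b/a) • t s₀ + a⁻¹ • bv s₀) - γ s₀ with hvdef
  set f : ℝ → ℝ := fun x => ⟪γ x + v, t x⟫ - (x + b/a) with hfdef
  set g : ℝ → ℝ := fun x => ⟪γ x + v, n x⟫ with hgdef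
  set h : ℝ → ℝ := fun x => ⟪γ x + v, bv x⟫ - a⁻¹ with hhdef
  have hγv : ∀ s : ℝ, HasDerivAt (fun x => γ x + v) (t s) s := fun s => (hγ' s).add_const v
  have hf' : ∀ s ∈ Ioo α β, HasDerivAt f (k s * g s) s := by
    intro s hs
    have h1 : HasDerivAt (fun x => ⟪γ x + v, t x⟫)
        (⟪γ s + v, k s • n s⟫ + ⟪t s, t s⟫) s := HasDerivAt.inner ℝ (hγv s) (ht' s hs)
    have h2 := h1.sub ((hasDerivAt_id s).add_const (b/a))
    refine h2.congr_deriv ?_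
    rw [real_inner_smul_right, htt s hs]
    simp only [hgdef]
    ring
  have hg' : ∀ s ∈ Ioo α β, HasDerivAt g (τ s * h s - k s * f s) s := by
    intro s hs
    have h1 : HasDerivAt (fun x => ⟪γ x + v, n x⟫)
        (⟪γ s + v, τ s • bv s - k s • t s⟫ + ⟪t s, n s⟫) s :=
      HasDerivAt.inner ℝ (hγv s) (hn' s hs)
    convert h1 using 1
    have hτk : τ s = (a * s + b) * k s := (div_eq_iff (hkne s hs)).mp (hratio s hs)
    rw [inner_sub_right, real_inner_smul_right, real_inner_smul_right, htn s hs]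
    simp only [hfdef, hhdef]
    rw [hτk]
    field_simp
    ring
  have hh' : ∀ s ∈ Ioo α β, HasDerivAt h (-(τ s * g s)) s := by
    intro s hs
    have h1 : HasDerivAt (fun x => ⟪γ x + v, bv x⟫)
        (⟪γ s + v, (-τ s) • n s⟫ + ⟪t s, bv s⟫) s :=
      HasDerivAt.inner ℝ (hγv s) (hbv' s hs)
    have h2 := h1.sub_const a⁻¹
    refine h2.congr_deriv ?_
    simp only [real_inner_smul_right, htb s, hgdef]
    ring
  set E : ℝ → ℝ := fun x => f x * f x + g x * g x + h x * h x with hEdef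
  have hE' : ∀ s ∈ Ioo α β, HasDerivAt E 0 s := by
    intro s hs
    have h1 := (((hf' s hs).mul (hf' s hs)).add ((hg' s hs).mul (hg' s hs))).add
      (((hh' s hs).mul (hh' s hs)))
    refine h1.congr_deriv ?_
    ring
  have hpt : γ s₀ + v = (s₀ + b/a) • t s₀ + a⁻¹ • bv s₀ := by
    rw [hvdef]; abel
  have hf0 : f s₀ = 0 := by
    have e : f s₀ = ⟪γ s₀ + v, t s₀⟫ - (s₀ + b/a) := rfl
    rw [e, hpt, inner_add_left, real_inner_smul_left, real_inner_smul_left, htt s₀ hs₀,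
      hbt s₀]
    ring
  have hg0 : g s₀ = 0 := by
    have e : g s₀ = ⟪γ s₀ + v, n s₀⟫ := rfl
    rw [e, hpt, inner_add_left, real_inner_smul_left, real_inner_smul_left, htn s₀ hs₀,
      hbn s₀]
    ring
  have hh0 : h s₀ = 0 := by
    have e : h s₀ = ⟪γ s₀ + v, bv s₀⟫ - a⁻¹ := rfl
    rw [e, hpt, inner_add_left, real_inner_smul_left, real_inner_smul_left, hbb s₀ hs₀,
      htb s₀]
    ring
  have hE0 : E s₀ = 0 := by
    simp only [hEdef]; rw [hf0, hg0, hh0]; ring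
  refine ⟨v, ?_⟩
  intro s hs
  have hEs : E s = 0 := by
    rcases le_total s₀ s with hle1 | hle1
    · have hsub : Icc s₀ s ⊆ Ioo α β := fun x hx =>
        ⟨lt_of_lt_of_le hs₀.1 hx.1, lt_of_le_of_lt hx.2 hs.2⟩
      have hcont : ContinuousOn E (Icc s₀ s) := fun x hx =>
        ((hE' x (hsub hx)).continuousAt).continuousWithinAt
      have hder : ∀ x ∈ Ico s₀ s, HasDerivWithinAt E 0 (Ici x) x := fun x hx =>
        (hE' x (hsub (Ico_subset_Icc_self hx))).hasDerivWithinAt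
      have := constant_of_has_deriv_right_zero hcont hder s (right_mem_Icc.2 hle1)
      rw [this, hE0]
    · have hsub : Icc s s₀ ⊆ Ioo α β := fun x hx =>
        ⟨lt_of_lt_of_le hs.1 hx.1, lt_of_le_of_lt hx.2 hs₀.2⟩
      have hcont : ContinuousOn E (Icc s s₀) := fun x hx =>
        ((hE' x (hsub hx)).continuousAt).continuousWithinAt
      have hder : ∀ x ∈ Ico s s₀, HasDerivWithinAt E 0 (Ici x) x := fun x hx =>
        (hE' x (hsub (Ico_subset_Icc_self hx))).hasDerivWithinAt
      have := constant_of_has_deriv_right_zero hcont hder s₀ (right_mem_Icc.2 hle1)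
      rw [← this, hE0]
  have hgs : g s * g s = 0 := by
    have hEs' : f s * f s + g s * g s + h s * h s = 0 := by
      rw [← hEs]
    nlinarith [mul_self_nonneg (f s), mul_self_nonneg (h s), mul_self_nonneg (g s)]
  have := mul_self_eq_zero.mp hgs
  simpa only [hgdef] using this
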